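/- arXiv:1411.6360 — 2 statements merged into one kernel-verified Lean document; each statement's English description precedes it below -/
import Mathlib

section
/- Let π be a finitely generated group, φ: π → π an endomorphism, and π' a φ-invariant, finitely generated, undistorted subgroup of π. Then GR(φ|_{π'}) ≤ GR(φ). If, in addition, π' is a normal subgroup of π, then GR(φ) = max{GR(φ|_{π'}), GR(φ̂)}, where φ̂ is the induced endomorphism of π/π'. -/
open Filter Topology

/-- Word length of `g` with respect to the (symmetrized) generating set `S`. -/
noncomputable def wordLength {G : Type*} [Group G] (S : Set G) (g : G) : ℕ :=
  sInf {n : ℕ | ∃ w : List G, w.length = n ∧ (∀ x ∈ w, x ∈ S ∨ x⁻¹ ∈ S) ∧ w.prod = g}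

/-- `L_k(f, S) = max_{s ∈ S} L(f^k(s), S)`. -/
noncomputable def Lk {G : Type*} [Group G] (S : Finset G) (f : G → G) (k : ℕ) : ℕ :=
  S.sup fun s => wordLength (S : Set G) (f^[k] s)

/-- The growth rate `GR(f) = inf_{k ≥ 1} L_k(f,S)^{1/k}` (which equals
`lim_{k→∞} L_k(f,S)^{1/k}`). -/
noncomputable def GR {G : Type*} [Group G] (S : Finset G) (f : G → G) : ℝ :=
  ⨅ k : ℕ+, (Lk S f k : ℝ) ^ (((k : ℕ) : ℝ))⁻¹

/-- `f` is eventually trivial if some iterate is the trivial endomorphism. -/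
def EventuallyTrivial {G : Type*} [Group G] (f : G → G) : Prop :=
  ∃ N : ℕ, 0 < N ∧ ∀ g, f^[N] g = 1

/-- The distortion function `Δ^π_{π'}(n)` of a subgroup `N` (with finite generating set
`S'`) inside `π` (with finite generating set `S`). -/
noncomputable def distortion {G : Type*} [Group G] (S : Finset G) (N : Subgroup G)
    (S' : Finset N) (n : ℕ) : ℕ :=
  sSup {m : ℕ | ∃ γ : N, wordLength (S' : Set N) γ = m ∧ wordLength (S : Set G) (γ : G) ≤ n}

/-- `f ≼ g`: there is `c > 0` with `f(n) ≤ c·g(c·n)` for all `n > 0`. -/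
def NatDominated (f g : ℕ → ℕ) : Prop :=
  ∃ c : ℕ, 0 < c ∧ ∀ n : ℕ, 0 < n → f n ≤ c * g (c * n)

/-- `f ≈ g`: `f ≼ g` and `g ≼ f`. -/
def NatEquiv (f g : ℕ → ℕ) : Prop := NatDominated f g ∧ NatDominated g f

/-- The subgroup `N` is undistorted in `G` if its distortion function is equivalent
to the identity. -/
def Undistorted {G : Type*} [Group G] (S : Finset G) (N : Subgroup G) (S' : Finset N) : Prop :=
  NatEquiv (distortion S N S') (fun n => n)

/-!
If `N` is undistorted, word lengths in `N` and in `π` are comparable, so `L_k(φ|_N) ≲ L_k(φ)`;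
lifting the generators of `π/N` gives `L_k(φ̂) ≲ L_k(φ)`. As `L_k` is submultiplicative, `GR` is
its exponential growth rate (Fekete), and both inequalities pass to growth rates.

Conversely, let `r` exceed both `GR(φ|_N)` and `GR(φ̂)`. For `g ∈ π` choose lifts `u_k` of
`φ̂^k(gN)` of length `O(r^k)`, with `u_0 = g`. Then `φ^k(g) = u_k x_k`, where
`x_k = u_k⁻¹ φ^k(g) ∈ N` satisfies `x_{k+1} = m_k φ(x_k)` with `m_k = u_{k+1}⁻¹ φ(u_k) ∈ N` of
length `O(r^k)`. Unrolling, `x_k = m_{k-1} φ(m_{k-2}) ⋯ φ^{k-1}(m_0)` has length `O(k r^k)`,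
hence `GR(φ) ≤ r`.
-/

section WordLength

variable {G H : Type*} [Group G] [Group H] {S : Set G}

theorem wordLength_prod_le_length {w : List G} (hw : ∀ x ∈ w, x ∈ S ∨ x⁻¹ ∈ S) :
    wordLength S w.prod ≤ w.length :=
  Nat.sInf_le ⟨w, rfl, hw, rfl⟩

theorem exists_geodesic_word (hS : Subgroup.closure S = ⊤) (g : G) :
    ∃ w : List G, (∀ x ∈ w, x ∈ S ∨ x⁻¹ ∈ S) ∧ w.prod = g ∧ w.length = wordLength S g := by
  have hg : g ∈ Submonoid.closure (S ∪ S⁻¹) := by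
    rw [← Subgroup.closure_toSubmonoid, hS]; trivial
  obtain ⟨w, hw, rfl⟩ := Submonoid.exists_list_of_mem_closure hg
  obtain ⟨v, hvlen, hv, hvw⟩ := Nat.sInf_mem (s := {n | ∃ v : List G, v.length = n ∧
    (∀ x ∈ v, x ∈ S ∨ x⁻¹ ∈ S) ∧ v.prod = w.prod}) ⟨w.length, w, rfl, hw, rfl⟩
  exact ⟨v, hv, hvw, hvlen⟩

@[simp]
theorem wordLength_one : wordLength S (1 : G) = 0 :=
  Nat.le_zero.mp (wordLength_prod_le_length (w := []) (by simp))

@[simp]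
theorem wordLength_inv (g : G) : wordLength S g⁻¹ = wordLength S g := by
  have key : ∀ g : G, {n | ∃ w : List G, w.length = n ∧ (∀ x ∈ w, x ∈ S ∨ x⁻¹ ∈ S) ∧
      w.prod = g} ⊆ {n | ∃ w : List G, w.length = n ∧ (∀ x ∈ w, x ∈ S ∨ x⁻¹ ∈ S) ∧
      w.prod = g⁻¹} := by
    rintro g _ ⟨w, rfl, hw, rfl⟩
    refine ⟨(w.map (·⁻¹)).reverse, by simp, ?_, List.prod_inv_reverse w ▸ rfl⟩
    simp only [List.mem_reverse, List.mem_map]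
    rintro _ ⟨x, hx, rfl⟩
    simpa [or_comm] using hw x hx
  have key' := key g⁻¹
  rw [inv_inv] at key'
  exact congrArg sInf (Set.Subset.antisymm key' (key g))

theorem wordLength_eq_zero (hS : Subgroup.closure S = ⊤) {g : G} :
    wordLength S g = 0 ↔ g = 1 := by
  refine ⟨fun h => ?_, fun h => h ▸ wordLength_one⟩
  obtain ⟨w, -, rfl, hw⟩ := exists_geodesic_word hS g
  simp [List.length_eq_zero_iff.mp (hw.trans h)]

theorem wordLength_mul_le (hS : Subgroup.closure S = ⊤) (g h : G) :
    wordLength S (g * h) ≤ wordLength S g + wordLength S h := by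
  obtain ⟨v, hv, rfl, hvg⟩ := exists_geodesic_word hS g
  obtain ⟨w, hw, rfl, hwh⟩ := exists_geodesic_word hS h
  rw [← hvg, ← hwh, ← List.length_append, ← List.prod_append]
  exact wordLength_prod_le_length (by simpa [or_imp, forall_and] using ⟨hv, hw⟩)

theorem wordLength_list_prod_le (hS : Subgroup.closure S = ⊤) {l : List G} {M : ℕ}
    (hl : ∀ x ∈ l, wordLength S x ≤ M) : wordLength S l.prod ≤ l.length * M := by
  induction l with
  | nil => simp
  | cons x l ih =>
    simp only [List.forall_mem_cons] at hl
    rw [List.prod_cons, List.length_cons, add_mul, one_mul, add_comm]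
    exact (wordLength_mul_le hS x l.prod).trans (add_le_add hl.1 (ih hl.2))

theorem wordLength_map_le {T : Set H} (hS : Subgroup.closure S = ⊤)
    (hT : Subgroup.closure T = ⊤) (ψ : G →* H) {M : ℕ}
    (hM : ∀ s ∈ S, wordLength T (ψ s) ≤ M) (g : G) :
    wordLength T (ψ g) ≤ M * wordLength S g := by
  obtain ⟨w, hw, rfl, hwg⟩ := exists_geodesic_word hS g
  rw [← hwg, map_list_prod, mul_comm, ← List.length_map ψ]
  refine wordLength_list_prod_le hT fun y hy => ?_
  obtain ⟨x, hx, rfl⟩ := List.mem_map.mp hy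
  rcases hw x hx with hx | hx
  · exact hM x hx
  · simpa using hM _ hx

theorem exists_lift_wordLength_le {T : Finset H} (hS : Subgroup.closure S = ⊤)
    (hT : Subgroup.closure (T : Set H) = ⊤) {p : G →* H} (hp : Function.Surjective p) :
    ∃ D : ℕ, ∀ h : H, ∃ g : G, p g = h ∧ wordLength S g ≤ D * wordLength (T : Set H) h := by
  classical
  let σ := Function.surjInv hp
  let lift : H → G := fun x => if x ∈ T then σ x else (σ x⁻¹)⁻¹
  refine ⟨T.sup fun t => wordLength S (σ t), fun h => ?_⟩
  obtain ⟨w, hw, rfl, hwh⟩ := exists_geodesic_word hT h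
  refine ⟨(w.map lift).prod, ?_, ?_⟩
  · have hlift : ∀ x, p (lift x) = x := fun x => by
      by_cases hx : x ∈ T <;> simp [lift, hx, σ, Function.surjInv_eq hp]
    simp [map_list_prod, Function.comp_def, hlift]
  · rw [← hwh, mul_comm, ← List.length_map lift]
    refine wordLength_list_prod_le hS fun y hy => ?_
    obtain ⟨x, hx, rfl⟩ := List.mem_map.mp hy
    by_cases hxT : x ∈ T
    · simpa [lift, hxT] using Finset.le_sup (f := fun t => wordLength S (σ t)) hxT
    · have hx' : x⁻¹ ∈ T := (hw x hx).resolve_left hxT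
      simpa [lift, hxT] using Finset.le_sup (f := fun t => wordLength S (σ t)) hx'

end WordLength

/-- `GR S f` is by definition `growthRate (Lk S f)`. -/
noncomputable def growthRate (a : ℕ → ℕ) : ℝ := ⨅ k : ℕ+, (a k : ℝ) ^ ((k : ℕ) : ℝ)⁻¹

theorem tendsto_mul_succ_rpow_inv_natCast {C : ℝ} (hC : 0 < C) :
    Tendsto (fun k : ℕ => (C * (k + 1)) ^ (k : ℝ)⁻¹) atTop (𝓝 1) := by
  have hlin : Tendsto (fun k : ℕ => C * ((k : ℝ) + 1)) atTop atTop :=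
    (tendsto_atTop_add_const_right _ 1 tendsto_natCast_atTop_atTop).const_mul_atTop hC
  refine ((tendsto_rpow_div_mul_add 1 C⁻¹ (-1) (inv_pos.mpr hC).ne).comp hlin).congr fun k => ?_
  simp only [Function.comp_apply]
  congr 1
  field_simp
  ring

theorem apply_mul_add_le_pow_mul {a : ℕ → ℕ} (ha : ∀ k l, a (k + l) ≤ a k * a l) (j q r : ℕ) :
    a (j * q + r) ≤ a j ^ q * a r := by
  induction q with
  | zero => simp
  | succ q ih =>
    calc a (j * (q + 1) + r) = a (j + (j * q + r)) := by ring_nf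
      _ ≤ a j * (a j ^ q * a r) := (ha _ _).trans (Nat.mul_le_mul_left _ ih)
      _ = a j ^ (q + 1) * a r := by ring

section GrowthRate

variable {a b : ℕ → ℕ}

theorem growthRate_nonneg (a : ℕ → ℕ) : 0 ≤ growthRate a :=
  le_ciInf fun _ => by positivity

theorem growthRate_le_rpow {k : ℕ} (hk : 0 < k) : growthRate a ≤ (a k : ℝ) ^ (k : ℝ)⁻¹ :=
  ciInf_le ⟨0, by rintro _ ⟨k, rfl⟩; positivity⟩ (⟨k, hk⟩ : ℕ+)

theorem growthRate_le_of_le_mul_succ_mul_pow {C r : ℝ} (hr : 0 ≤ r)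
    (h : ∀ k, 0 < k → (a k : ℝ) ≤ C * (k + 1) * r ^ k) : growthRate a ≤ r := by
  set C' := max C 1
  have hbound : ∀ᶠ k : ℕ in atTop, growthRate a ≤ (C' * (k + 1)) ^ (k : ℝ)⁻¹ * r := by
    filter_upwards [eventually_gt_atTop 0] with k hk
    calc growthRate a ≤ (a k : ℝ) ^ (k : ℝ)⁻¹ := growthRate_le_rpow hk
      _ ≤ (C' * (k + 1) * r ^ k) ^ (k : ℝ)⁻¹ := by
        gcongr
        exact (h k hk).trans (by gcongr; exact le_max_left C 1)
      _ = (C' * (k + 1)) ^ (k : ℝ)⁻¹ * r := by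
        rw [Real.mul_rpow (by positivity) (by positivity), Real.pow_rpow_inv_natCast hr hk.ne']
  have hC' : 0 < C' := lt_max_of_lt_right one_pos
  simpa using ge_of_tendsto ((tendsto_mul_succ_rpow_inv_natCast hC').mul_const r) hbound

theorem exists_le_mul_pow_of_growthRate_lt (ha : ∀ k l, a (k + l) ≤ a k * a l) {r : ℝ}
    (hr : 0 < r) (h : growthRate a < r) : ∃ C : ℝ, ∀ k, (a k : ℝ) ≤ C * r ^ k := by
  -- Fekete: `a j < r ^ j` for a single `j` spreads to all `k = j * (k / j) + k % j`.
  obtain ⟨⟨j, hj⟩, hjr⟩ := exists_lt_of_ciInf_lt h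
  have haj : (a j : ℝ) < r ^ j := by
    rw [← Real.rpow_inv_natCast_pow (Nat.cast_nonneg (a j)) hj.ne']
    exact pow_lt_pow_left₀ hjr (by positivity) hj.ne'
  refine ⟨∑ i ∈ Finset.range j, a i / r ^ i, fun k => ?_⟩
  have hk : j * (k / j) + k % j = k := Nat.div_add_mod k j
  have hrem : (a (k % j) : ℝ) / r ^ (k % j) ≤ ∑ i ∈ Finset.range j, a i / r ^ i :=
    Finset.single_le_sum (f := fun i => (a i : ℝ) / r ^ i) (fun _ _ => by positivity)
      (Finset.mem_range.mpr (Nat.mod_lt k hj))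
  calc (a k : ℝ) ≤ (a j : ℝ) ^ (k / j) * a (k % j) := by
        have := apply_mul_add_le_pow_mul ha j (k / j) (k % j)
        rw [hk] at this
        exact_mod_cast this
    _ ≤ (r ^ j) ^ (k / j) * a (k % j) := by gcongr
    _ = (a (k % j) / r ^ (k % j)) * r ^ k := by
        rw [← pow_mul, ← hk, pow_add, hk]; field_simp
    _ ≤ (∑ i ∈ Finset.range j, a i / r ^ i) * r ^ k := by gcongr

theorem growthRate_le_growthRate_of_le_mul (hb : ∀ k l, b (k + l) ≤ b k * b l) (c : ℕ)
    (h : ∀ k, 0 < k → a k ≤ c * b k) : growthRate a ≤ growthRate b := by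
  refine le_of_forall_gt_imp_ge_of_dense fun r hr => ?_
  have hr0 : 0 < r := (growthRate_nonneg b).trans_lt hr
  obtain ⟨C, hC⟩ := exists_le_mul_pow_of_growthRate_lt hb hr0 hr
  have hC0 : 0 ≤ C := by simpa using (Nat.cast_nonneg (b 0)).trans (hC 0)
  refine growthRate_le_of_le_mul_succ_mul_pow (C := c * C) hr0.le fun k hk => ?_
  calc (a k : ℝ) ≤ c * b k := by exact_mod_cast h k hk
    _ ≤ c * (C * r ^ k) := by gcongr; exact hC k
    _ = c * C * 1 * r ^ k := by ring
    _ ≤ c * C * (k + 1) * r ^ k := by gcongr; simp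

end GrowthRate

section Iterates

variable {G H : Type*} [Group G] [Group H] {S : Finset G}

theorem wordLength_iterate_le (hS : Subgroup.closure (S : Set G) = ⊤) (φ : G →* G) (k : ℕ)
    (g : G) : wordLength S (φ^[k] g) ≤ Lk S φ k * wordLength S g :=
  -- `φ ^ k` in `Monoid.End G` coerces to `φ^[k]`
  wordLength_map_le hS hS ((show Monoid.End G from φ) ^ k)
    (fun _ hs => Finset.le_sup (f := fun s => wordLength S (φ^[k] s)) hs) g

theorem Lk_add_le (hS : Subgroup.closure (S : Set G) = ⊤) (φ : G →* G) (k l : ℕ) :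
    Lk S φ (k + l) ≤ Lk S φ k * Lk S φ l := by
  refine Finset.sup_le fun s hs => ?_
  rw [add_comm, Function.iterate_add_apply, mul_comm]
  exact (wordLength_iterate_le hS φ l _).trans
    (Nat.mul_le_mul_left _ (Finset.le_sup (f := fun s => wordLength S (φ^[k] s)) hs))

theorem wordLength_iterate_le_of_eq_mul {T : Finset H} (hT : Subgroup.closure (T : Set H) = ⊤)
    (ψ : H →* H) {x m : ℕ → H} (hx0 : x 0 = 1) (hx : ∀ k, x (k + 1) = m k * ψ (x k))
    {A B r : ℝ} (hB : ∀ j, (Lk T ψ j : ℝ) ≤ B * r ^ j)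
    (hm : ∀ j, (wordLength T (m j) : ℝ) ≤ A * r ^ (j + 1)) (k i : ℕ) :
    (wordLength T (ψ^[i] (x k)) : ℝ) ≤ k * A * B * r ^ (i + k) := by
  induction k generalizing i with
  | zero => simp [hx0]
  | succ k ih =>
    have hsplit : ψ^[i] (x (k + 1)) = ψ^[i] (m k) * ψ^[i + 1] (x k) := by
      rw [hx, iterate_map_mul, Function.iterate_succ_apply]
    have hmul := wordLength_mul_le hT (ψ^[i] (m k)) (ψ^[i + 1] (x k))
    have hhead : (wordLength T (ψ^[i] (m k)) : ℝ) ≤ B * r ^ i * (A * r ^ (k + 1)) := by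
      calc (wordLength T (ψ^[i] (m k)) : ℝ) ≤ Lk T ψ i * wordLength T (m k) := by
            exact_mod_cast wordLength_iterate_le hT ψ i (m k)
        _ ≤ B * r ^ i * (A * r ^ (k + 1)) :=
            mul_le_mul (hB i) (hm k) (Nat.cast_nonneg _) ((Nat.cast_nonneg _).trans (hB i))
    calc (wordLength T (ψ^[i] (x (k + 1))) : ℝ)
        ≤ wordLength T (ψ^[i] (m k)) + wordLength T (ψ^[i + 1] (x k)) := by
          rw [hsplit]; exact_mod_cast hmul
      _ ≤ B * r ^ i * (A * r ^ (k + 1)) + k * A * B * r ^ (i + 1 + k) := add_le_add hhead (ih _)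
      _ = (k + 1 : ℕ) * A * B * r ^ (i + (k + 1)) := by push_cast; ring

end Iterates

section Comparison

variable {G H : Type*} [Group G] [Group H] {S : Finset G} {T : Finset H} {φ : G →* G}
  {ψ : H →* H}

theorem GR_le_of_semiconj (hS : Subgroup.closure (S : Set G) = ⊤) {i : H →* G}
    (hi : Function.Semiconj i ψ φ) {c : ℕ}
    (hc : ∀ x, wordLength T x ≤ c * wordLength S (i x)) : GR T ψ ≤ GR S φ := by
  set M := T.sup fun t => wordLength S (i t)
  refine growthRate_le_growthRate_of_le_mul (Lk_add_le hS φ) (c * M)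
    fun k _ => Finset.sup_le fun t ht => ?_
  calc wordLength T (ψ^[k] t) ≤ c * wordLength S (φ^[k] (i t)) := by
        rw [← hi.iterate_right k t]; exact hc _
    _ ≤ c * (Lk S φ k * M) := by
        gcongr
        exact (wordLength_iterate_le hS φ k _).trans
          (Nat.mul_le_mul_left _ (Finset.le_sup (f := fun t => wordLength S (i t)) ht))
    _ = c * M * Lk S φ k := by ring

theorem GR_le_of_surjective_of_semiconj (hS : Subgroup.closure (S : Set G) = ⊤)
    (hT : Subgroup.closure (T : Set H) = ⊤) {p : G →* H} (hp : Function.Surjective p)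
    (hpφ : Function.Semiconj p φ ψ) : GR T ψ ≤ GR S φ := by
  let σ := Function.surjInv hp
  set M := S.sup fun s => wordLength T (p s)
  set M' := T.sup fun t => wordLength S (σ t)
  refine growthRate_le_growthRate_of_le_mul (Lk_add_le hS φ) (M * M')
    fun k _ => Finset.sup_le fun t ht => ?_
  calc wordLength T (ψ^[k] t) = wordLength T (p (φ^[k] (σ t))) := by
        rw [hpφ.iterate_right k (σ t), Function.surjInv_eq hp]
    _ ≤ M * wordLength S (φ^[k] (σ t)) := wordLength_map_le hS hT p
        (fun _ hs => Finset.le_sup (f := fun s => wordLength T (p s)) hs) _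
    _ ≤ M * (Lk S φ k * M') := by
        gcongr
        exact (wordLength_iterate_le hS φ k _).trans
          (Nat.mul_le_mul_left _ (Finset.le_sup (f := fun t => wordLength S (σ t)) ht))
    _ = M * M' * Lk S φ k := by ring

end Comparison

section Undistorted

open Pointwise

theorem list_prod_mem_pow {M : Type*} [Monoid M] {A : Set M} {w : List M}
    (hw : ∀ x ∈ w, x ∈ A) : w.prod ∈ A ^ w.length := by
  induction w with
  | nil => simp
  | cons x w ih =>
    simp only [List.forall_mem_cons] at hw
    rw [List.prod_cons, List.length_cons, pow_succ']
    exact Set.mul_mem_mul hw.1 (ih hw.2)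

variable {G : Type*} [Group G] {S : Finset G}

theorem finite_setOf_wordLength_le (hS : Subgroup.closure (S : Set G) = ⊤) (n : ℕ) :
    {g | wordLength (S : Set G) g ≤ n}.Finite := by
  classical
  refine ((Finset.range (n + 1)).finite_toSet.biUnion
    fun m _ => ((S ∪ S⁻¹) ^ m).finite_toSet).subset fun g hg => ?_
  obtain ⟨w, hw, rfl, hwg⟩ := exists_geodesic_word hS g
  have hlen : w.length ∈ (Finset.range (n + 1) : Set ℕ) := by
    simp only [Set.mem_ofPred_eq, Finset.coe_range, Set.mem_Iio] at hg ⊢; omega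
  refine Set.mem_biUnion hlen ?_
  rw [Finset.mem_coe, ← Finset.mem_coe, Finset.coe_pow]
  exact list_prod_mem_pow fun x hx => by simpa using hw x hx

theorem exists_wordLength_le_mul_of_undistorted (hS : Subgroup.closure (S : Set G) = ⊤)
    {N : Subgroup G} {S' : Finset N} (hund : Undistorted S N S') :
    ∃ c : ℕ, ∀ x : N, wordLength S' x ≤ c * wordLength S (x : G) := by
  obtain ⟨⟨c, -, hc⟩, -⟩ := hund
  refine ⟨c * c, fun x => ?_⟩
  rcases Nat.eq_zero_or_pos (wordLength S (x : G)) with h0 | hpos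
  · simp [show x = 1 from Subtype.ext ((wordLength_eq_zero hS).mp h0)]
  have hbdd : BddAbove {m | ∃ γ : N, wordLength S' γ = m ∧
      wordLength S (γ : G) ≤ wordLength S (x : G)} :=
    (((finite_setOf_wordLength_le hS _).preimage Subtype.val_injective.injOn).image
      (wordLength (S' : Set N))).subset (by rintro _ ⟨γ, rfl, hγ⟩; exact ⟨γ, hγ, rfl⟩)
      |>.bddAbove
  calc wordLength S' x ≤ distortion S N S' (wordLength S (x : G)) :=
        le_csSup hbdd ⟨x, rfl, le_rfl⟩
    _ ≤ c * (c * wordLength S (x : G)) := hc _ hpos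
    _ = c * c * wordLength S (x : G) := by ring

end Undistorted

section Extension

variable {G Q : Type*} [Group G] [Group Q] {S : Finset G} {φ : G →* G} {N : Subgroup G}
  {S' : Finset N} {ψN : N →* N} {T : Finset Q} {ψ : Q →* Q} {p : G →* Q} {u : ℕ → G}

theorem inv_mul_iterate_mem (hψN : ∀ x : N, (ψN x : G) = φ x)
    (hum : ∀ k, (u (k + 1))⁻¹ * φ (u k) ∈ N) (k : ℕ) : (u k)⁻¹ * φ^[k] (u 0) ∈ N := by
  induction k with
  | zero => simp
  | succ k ih =>
    have hsplit : (u (k + 1))⁻¹ * φ^[k + 1] (u 0) =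
        ((u (k + 1))⁻¹ * φ (u k)) * φ ((u k)⁻¹ * φ^[k] (u 0)) := by
      rw [Function.iterate_succ_apply', map_mul, map_inv]; group
    rw [hsplit]
    exact N.mul_mem (hum k) (hψN ⟨_, ih⟩ ▸ (ψN ⟨_, ih⟩).2)

theorem wordLength_inv_mul_map_le (hS : Subgroup.closure (S : Set G) = ⊤) {c : ℕ}
    (hc : ∀ x : N, wordLength S' x ≤ c * wordLength S (x : G)) {r A : ℝ} (hr : 0 < r)
    (hu : ∀ k, (wordLength S (u k) : ℝ) ≤ A * r ^ k) (hum : ∀ k, (u (k + 1))⁻¹ * φ (u k) ∈ N)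
    (j : ℕ) :
    (wordLength S' (⟨_, hum j⟩ : N) : ℝ) ≤ c * A * (1 + Lk S φ 1 / r) * r ^ (j + 1) := by
  have hmS : wordLength S ((u (j + 1))⁻¹ * φ (u j)) ≤
      wordLength S (u (j + 1)) + Lk S φ 1 * wordLength S (u j) :=
    (wordLength_mul_le hS _ _).trans
      (add_le_add (wordLength_inv _).le (wordLength_iterate_le hS φ 1 (u j)))
  calc (wordLength S' (⟨_, hum j⟩ : N) : ℝ)
      ≤ c * (A * r ^ (j + 1) + Lk S φ 1 * (A * r ^ j)) := by
        refine (Nat.cast_le.mpr ((hc _).trans (Nat.mul_le_mul_left c hmS))).trans ?_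
        push_cast
        gcongr
        exacts [hu _, hu _]
    _ = c * A * (1 + Lk S φ 1 / r) * r ^ (j + 1) := by field_simp; ring

theorem exists_wordLength_iterate_le_of_lifts (hS : Subgroup.closure (S : Set G) = ⊤)
    (hS' : Subgroup.closure (S' : Set N) = ⊤) (hψN : ∀ x : N, (ψN x : G) = φ x) {c : ℕ}
    (hc : ∀ x : N, wordLength S' x ≤ c * wordLength S (x : G)) {r A B : ℝ} (hr : 0 < r)
    (hB : ∀ j, (Lk S' ψN j : ℝ) ≤ B * r ^ j) (hu : ∀ k, (wordLength S (u k) : ℝ) ≤ A * r ^ k)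
    (hum : ∀ k, (u (k + 1))⁻¹ * φ (u k) ∈ N) :
    ∃ C : ℝ, ∀ k, (wordLength S (φ^[k] (u 0)) : ℝ) ≤ C * (k + 1) * r ^ k := by
  set E := S'.sup fun t => wordLength S (t : G)
  set A' := c * A * (1 + Lk S φ 1 / r)
  have hA : 0 ≤ A := by simpa using (Nat.cast_nonneg _).trans (hu 0)
  have hB0 : 0 ≤ B := by simpa using (Nat.cast_nonneg _).trans (hB 0)
  let x : ℕ → N := fun k => ⟨_, inv_mul_iterate_mem hψN hum k⟩
  have hrec : ∀ k, x (k + 1) = ⟨_, hum k⟩ * ψN (x k) := fun k => Subtype.ext <| by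
    simp only [x, Subgroup.coe_mul, hψN, map_mul, map_inv, Function.iterate_succ_apply']
    group
  have hx := wordLength_iterate_le_of_eq_mul hS' ψN (Subtype.ext (by simp [x])) hrec hB
    (wordLength_inv_mul_map_le hS hc hr hu hum)
  refine ⟨A + E * A' * B, fun k => ?_⟩
  have hsplit : φ^[k] (u 0) = u k * (x k : G) := by simp [x]
  have hxS : wordLength S (x k : G) ≤ E * wordLength S' (x k) :=
    wordLength_map_le (M := E) hS' hS N.subtype
      (fun _ ht => Finset.le_sup (f := fun t : N => wordLength S (t : G)) ht) (x k)
  have hA' : 0 ≤ A' := by positivity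
  calc (wordLength S (φ^[k] (u 0)) : ℝ) ≤ wordLength S (u k) + E * wordLength S' (x k) := by
        rw [hsplit]
        exact_mod_cast (wordLength_mul_le hS _ _).trans (Nat.add_le_add_left hxS _)
    _ ≤ A * r ^ k + E * (k * A' * B * r ^ (0 + k)) := by
        gcongr
        exacts [hu k, hx k 0]
    _ ≤ (A + E * A' * B) * (k + 1) * r ^ k := by
        rw [zero_add]
        have h1 : 0 ≤ E * A' * B * r ^ k := by positivity
        have h2 : 0 ≤ A * r ^ k * k := by positivity
        linarith

theorem exists_lifts_of_surjective (hS : Subgroup.closure (S : Set G) = ⊤)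
    (hT : Subgroup.closure (T : Set Q) = ⊤) (hp : Function.Surjective p)
    (hpφ : Function.Semiconj p φ ψ) {r C : ℝ} (hr : 0 ≤ r)
    (hC : ∀ j, (Lk T ψ j : ℝ) ≤ C * r ^ j) (g : G) :
    ∃ u : ℕ → G, u 0 = g ∧ (∀ k, (u (k + 1))⁻¹ * φ (u k) ∈ p.ker) ∧
      ∃ A : ℝ, ∀ k, (wordLength S (u k) : ℝ) ≤ A * r ^ k := by
  obtain ⟨D, hD⟩ := exists_lift_wordLength_le hS hT hp
  choose lift hlift hlift_le using hD
  let u : ℕ → G := fun k => if k = 0 then g else lift (ψ^[k] (p g))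
  have hpu : ∀ k, p (u k) = ψ^[k] (p g) := fun k => by
    by_cases hk : k = 0 <;> simp [u, hk, hlift]
  have hC0 : 0 ≤ C := by simpa using (Nat.cast_nonneg _).trans (hC 0)
  refine ⟨u, by simp [u], fun k => ?_, wordLength S g + D * C * wordLength T (p g), fun k => ?_⟩
  · rw [MonoidHom.mem_ker, map_mul, map_inv, hpφ (u k), hpu, hpu,
      Function.iterate_succ_apply', inv_mul_cancel]
  by_cases hk : k = 0
  · subst hk
    have : 0 ≤ D * C * wordLength T (p g) := by positivity
    simp only [u, ↓reduceIte, pow_zero, mul_one]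
    linarith
  calc (wordLength S (u k) : ℝ) ≤ D * (Lk T ψ k * wordLength T (p g)) := by
        simp only [u, hk, if_false]
        exact_mod_cast (hlift_le _).trans
          (Nat.mul_le_mul_left D (wordLength_iterate_le hT ψ k (p g)))
    _ ≤ D * (C * r ^ k * wordLength T (p g)) := by gcongr; exact hC k
    _ ≤ (wordLength S g + D * C * wordLength T (p g)) * r ^ k := by
        have : 0 ≤ wordLength S g * r ^ k := by positivity
        linarith

theorem GR_le_max_of_ker_le (hS : Subgroup.closure (S : Set G) = ⊤)
    (hS' : Subgroup.closure (S' : Set N) = ⊤) (hT : Subgroup.closure (T : Set Q) = ⊤)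
    (hψN : ∀ x : N, (ψN x : G) = φ x) {c : ℕ}
    (hc : ∀ x : N, wordLength S' x ≤ c * wordLength S (x : G))
    (hp : Function.Surjective p) (hpφ : Function.Semiconj p φ ψ) (hker : p.ker ≤ N) :
    GR S φ ≤ max (GR S' ψN) (GR T ψ) := by
  refine le_of_forall_gt_imp_ge_of_dense fun r hr => ?_
  have hr0 : 0 < r := ((growthRate_nonneg _).trans (le_max_left _ _)).trans_lt hr
  obtain ⟨B, hB⟩ := exists_le_mul_pow_of_growthRate_lt (Lk_add_le hS' ψN) hr0
    ((le_max_left _ _).trans_lt hr)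
  obtain ⟨CQ, hCQ⟩ := exists_le_mul_pow_of_growthRate_lt (Lk_add_le hT ψ) hr0
    ((le_max_right _ _).trans_lt hr)
  have hgrowth : ∀ g, ∃ C : ℝ, ∀ k, (wordLength S (φ^[k] g) : ℝ) ≤ C * (k + 1) * r ^ k := by
    intro g
    obtain ⟨u, rfl, hum, A, hu⟩ := exists_lifts_of_surjective hS hT hp hpφ hr0.le hCQ g
    exact exists_wordLength_iterate_le_of_lifts hS hS' hψN hc hr0 hB hu fun k => hker (hum k)
  choose C hC using hgrowth
  refine growthRate_le_of_le_mul_succ_mul_pow (C := ∑ s ∈ S, C s) hr0.le fun k _ => ?_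
  calc (Lk S φ k : ℝ) ≤ ∑ s ∈ S, (wordLength S (φ^[k] s) : ℝ) := by
        exact_mod_cast Finset.sup_le fun s hs => Finset.single_le_sum
          (f := fun s => wordLength S (φ^[k] s)) (fun _ _ => Nat.zero_le _) hs
    _ ≤ ∑ s ∈ S, C s * (k + 1) * r ^ k := Finset.sum_le_sum fun s _ => hC s k
    _ = (∑ s ∈ S, C s) * (k + 1) * r ^ k := by rw [Finset.sum_mul, Finset.sum_mul]

end Extension

/-- If `π'` is a `φ`-invariant, finitely generated, undistorted subgroup of
the finitely generated group `π`, then `GR(φ|_{π'}) ≤ GR(φ)`; and if moreover `π'` is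
normal, then `GR(φ) = max{GR(φ|_{π'}), GR(φ̂)}`. -/
theorem GR_restriction_le_of_undistorted {π : Type*} [Group π] (S : Finset π)
    (hS : Subgroup.closure (S : Set π) = ⊤) (φ : π →* π)
    (N : Subgroup π) (hinv : ∀ g ∈ N, φ g ∈ N)
    (S' : Finset N) (hS' : Subgroup.closure (S' : Set N) = ⊤)
    (hund : Undistorted S N S') :
    GR S' (fun x : N => (⟨φ x, hinv x x.2⟩ : N)) ≤ GR S ⇑φ ∧
    (∀ (_ : N.Normal) (T : Finset (π ⧸ N)),
      Subgroup.closure (T : Set (π ⧸ N)) = ⊤ →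
      GR S ⇑φ = max (GR S' (fun x : N => (⟨φ x, hinv x x.2⟩ : N)))
        (GR T ⇑(QuotientGroup.map N N φ (fun g hg => hinv g hg)))) := by
  let φN : N →* N := (φ.domRestrict N).codRestrict N fun x => hinv x x.2
  have hφN : ∀ x : N, (φN x : π) = φ x := fun _ => rfl
  obtain ⟨c, hc⟩ := exists_wordLength_le_mul_of_undistorted hS hund
  have hsub : GR S' φN ≤ GR S φ := GR_le_of_semiconj hS (i := N.subtype) hφN hc
  refine ⟨hsub, fun _ T hT => ?_⟩
  have hpφ : Function.Semiconj (QuotientGroup.mk' N) φ (QuotientGroup.map N N φ hinv) :=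
    fun g => (QuotientGroup.map_mk' N N φ hinv g).symm
  have hle_max := GR_le_max_of_ker_le hS hS' hT hφN hc (QuotientGroup.mk'_surjective N) hpφ
      (QuotientGroup.ker_mk' N).le
  have hquot := GR_le_of_surjective_of_semiconj hS hT (QuotientGroup.mk'_surjective N) hpφ
  exact le_antisymm hle_max (max_le hsub hquot)
end

section
/- Let π be a finitely generated group and φ: π → π an endomorphism. If GR(φ) < 1, then GR(φ) = 0 and φ is eventually trivial; conversely, if φ is eventually trivial, then GR(φ) = 0. -/
open Filter Topology

/-!
The `k`-th term `L_k^{1/k}` of the infimum defining `GR` is the `k`-th root of a natural number,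
so it is either `0` (when `L_k = 0`) or at least `1`. Hence `GR < 1` forces some `L_k` to vanish,
which makes `φ^k` kill every generator and thus all of `π`; conversely if `φ^N = 1` then
`L_N = 0` and the infimum is `0`.
-/

section WordLength

variable {G : Type*} [Group G] {S : Set G} {g : G}

lemma exists_word_of_mem_closure (hg : g ∈ Subgroup.closure S) :
    ∃ w : List G, (∀ x ∈ w, x ∈ S ∨ x⁻¹ ∈ S) ∧ w.prod = g := by
  rw [← Subgroup.mem_toSubmonoid, Subgroup.closure_toSubmonoid] at hg
  exact Submonoid.exists_list_of_mem_closure hg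

lemma wordLength_eq_zero_iff (hg : g ∈ Subgroup.closure S) : wordLength S g = 0 ↔ g = 1 := by
  obtain ⟨w, hwS, hw⟩ := exists_word_of_mem_closure hg
  refine ⟨fun h => ?_, fun h => Nat.sInf_eq_zero.mpr (.inl ⟨[], rfl, by simp, by simp [h]⟩)⟩
  rcases Nat.sInf_eq_zero.mp h with ⟨w₀, hw₀, -, rfl⟩ | hempty
  · simp [List.length_eq_zero_iff.mp hw₀]
  · have hne : {n : ℕ | ∃ w : List G, w.length = n ∧ (∀ x ∈ w, x ∈ S ∨ x⁻¹ ∈ S) ∧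
        w.prod = g}.Nonempty := ⟨w.length, w, rfl, hwS, hw⟩
    exact absurd hempty hne.ne_empty

end WordLength

section GrowthRate

variable {G : Type*} [Group G] {S : Finset G}

lemma Lk_eq_zero_iff (hS : Subgroup.closure (S : Set G) = ⊤) {f : G → G} {k : ℕ} :
    Lk S f k = 0 ↔ ∀ s ∈ S, f^[k] s = 1 := by
  rw [Lk, ← bot_eq_zero, Finset.sup_eq_bot_iff]
  exact forall₂_congr fun s _ => wordLength_eq_zero_iff (hS ▸ Subgroup.mem_top _)

lemma GR_le_zero_of_Lk_eq_zero {f : G → G} {k : ℕ+} (hk : Lk S f k = 0) : GR S f ≤ 0 := by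
  have hbdd : BddBelow (Set.range fun k : ℕ+ => (Lk S f k : ℝ) ^ (((k : ℕ) : ℝ))⁻¹) :=
    ⟨0, by rintro x ⟨k, rfl⟩; positivity⟩
  calc GR S f ≤ (Lk S f k : ℝ) ^ (((k : ℕ) : ℝ))⁻¹ := ciInf_le hbdd k
    _ = 0 := by rw [hk, Nat.cast_zero, Real.zero_rpow (by positivity)]

lemma GR_nonneg (f : G → G) : 0 ≤ GR S f :=
  le_ciInf fun _ => by positivity

lemma exists_Lk_eq_zero_of_GR_lt_one {f : G → G} (h : GR S f < 1) : ∃ k : ℕ+, Lk S f k = 0 := by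
  by_contra! hne
  refine h.not_ge (le_ciInf fun k => Real.one_le_rpow ?_ (by positivity))
  exact_mod_cast Nat.one_le_iff_ne_zero.mpr (hne k)

end GrowthRate

lemma MonoidHom.iterate_apply_eq_one_of_closure_eq_top {G : Type*} [Group G] {S : Set G}
    (hS : Subgroup.closure S = ⊤) (φ : G →* G) {k : ℕ} (hk : ∀ s ∈ S, φ^[k] s = 1) (g : G) :
    φ^[k] g = 1 := by
  induction hS ▸ Subgroup.mem_top g using Subgroup.closure_induction with
  | mem s hs => exact hk s hs
  | one => exact iterate_map_one φ k
  | mul x y _ _ hx hy => rw [iterate_map_mul, hx, hy, one_mul]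
  | inv x _ hx => rw [iterate_map_inv, hx, inv_one]

lemma eventuallyTrivial_iff_exists_Lk_eq_zero {G : Type*} [Group G] {S : Finset G}
    (hS : Subgroup.closure (S : Set G) = ⊤) (φ : G →* G) :
    EventuallyTrivial ⇑φ ↔ ∃ k : ℕ+, Lk S ⇑φ k = 0 := by
  simp only [Lk_eq_zero_iff hS]
  constructor
  · rintro ⟨N, hN, hφN⟩
    exact ⟨⟨N, hN⟩, fun s _ => hφN s⟩
  · rintro ⟨k, hk⟩
    exact ⟨k, k.pos, φ.iterate_apply_eq_one_of_closure_eq_top hS hk⟩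

/-- If `GR(φ) < 1` then `GR(φ) = 0` and `φ` is eventually trivial;
conversely, if `φ` is eventually trivial then `GR(φ) = 0`. -/
theorem GR_lt_one_iff_eventuallyTrivial {π : Type*} [Group π] (S : Finset π)
    (hS : Subgroup.closure (S : Set π) = ⊤) (φ : π →* π) :
    (GR S ⇑φ < 1 → GR S ⇑φ = 0 ∧ EventuallyTrivial ⇑φ) ∧
    (EventuallyTrivial ⇑φ → GR S ⇑φ = 0) := by
  rw [eventuallyTrivial_iff_exists_Lk_eq_zero hS]
  have hzero : (∃ k : ℕ+, Lk S ⇑φ k = 0) → GR S ⇑φ = 0 := fun ⟨_, hk⟩ =>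
    (GR_le_zero_of_Lk_eq_zero hk).antisymm (GR_nonneg _)
  refine ⟨fun h => ?_, hzero⟩
  have hk := exists_Lk_eq_zero_of_GR_lt_one h
  exact ⟨hzero hk, hk⟩
end
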